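/- Let W be the subset of Σ₂ consisting of all sequences with only finitely many coordinates equal to 1. Then: (i) the restriction of the shift map σ to W is topologically transitive (for every pair of nonempty relatively open sets U, V ⊆ W there exists a positive integer n with σⁿ(U) ∩ V ≠ ∅); (ii) σ restricted to W has sensitive dependence on initial conditions (there exists δ > 0 such that for every x ∈ W and every relatively open neighborhood V ⊆ W of x there exist y ∈ V and n ≥ 0 with d(σⁿ(x), σⁿ(y)) ≥ δ); and (iii) every point of W is eventually fixed: for every β ∈ W there is a nonnegative integer n such that σⁿ(β) is the constant-0 sequence. -/
import Mathlib


open Filter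

/-- The shift map on the space `Σ₂` of binary sequences. -/
def shift (β : ℕ → Bool) : ℕ → Bool := fun i => β (i + 1)

/-- The metric `d(β,γ) = ∑ᵢ |βᵢ - γᵢ| / 2^(i+1)` on `Σ₂`. -/
noncomputable def d2 (β γ : ℕ → Bool) : ℝ :=
  ∑' i : ℕ, |(if β i then (1 : ℝ) else 0) - (if γ i then (1 : ℝ) else 0)| / 2 ^ (i + 1)

/-- A set is open in `Σ₂` (with respect to the metric `d2`). -/
def IsOpen2 (V : Set (ℕ → Bool)) : Prop :=
  ∀ β ∈ V, ∃ ε : ℝ, 0 < ε ∧ ∀ γ : ℕ → Bool, d2 β γ < ε → γ ∈ V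

/-- The set `W` of binary sequences with only finitely many coordinates equal to 1. -/
def Wset : Set (ℕ → Bool) := {β | {i : ℕ | β i = true}.Finite}

/-- The `i`-th term of the series defining `d2`. -/
noncomputable def dterm (β γ : ℕ → Bool) (i : ℕ) : ℝ :=
  |(if β i then (1 : ℝ) else 0) - (if γ i then (1 : ℝ) else 0)| / 2 ^ (i + 1)

lemma d2_eq_tsum (β γ : ℕ → Bool) : d2 β γ = ∑' i, dterm β γ i := rfl

lemma dterm_nonneg (β γ : ℕ → Bool) (i : ℕ) : 0 ≤ dterm β γ i :=
  div_nonneg (abs_nonneg _) (by positivity)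

lemma dterm_le (β γ : ℕ → Bool) (i : ℕ) : dterm β γ i ≤ (1/2 : ℝ) ^ (i + 1) := by
  have h1 : |(if β i then (1 : ℝ) else 0) - (if γ i then (1 : ℝ) else 0)| ≤ 1 := by
    cases β i <;> cases γ i <;> norm_num
  calc dterm β γ i ≤ 1 / 2 ^ (i + 1) := by
        unfold dterm; gcongr
    _ = (1/2 : ℝ) ^ (i + 1) := by rw [one_div_pow]

lemma dterm_eq_of_ne {β γ : ℕ → Bool} {i : ℕ} (h : β i ≠ γ i) :
    dterm β γ i = (1/2 : ℝ) ^ (i + 1) := by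
  unfold dterm
  cases hb : β i <;> cases hc : γ i <;> simp_all [one_div_pow]

lemma dterm_eq_zero {β γ : ℕ → Bool} {i : ℕ} (h : β i = γ i) : dterm β γ i = 0 := by
  unfold dterm; rw [h]; simp

lemma summable_geo_succ : Summable (fun i : ℕ => (1/2 : ℝ) ^ (i + 1)) :=
  (summable_nat_add_iff 1).mpr
    (summable_geometric_of_lt_one (by norm_num) (by norm_num : (1/2:ℝ) < 1))

lemma tsum_geo_succ : ∑' i : ℕ, (1/2 : ℝ) ^ (i + 1) = 1 := by
  have h : ∑' i : ℕ, (1/2 : ℝ) ^ i = 2 := by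
    rw [tsum_geometric_of_lt_one (by norm_num) (by norm_num)]; norm_num
  calc ∑' i : ℕ, (1/2 : ℝ) ^ (i + 1) = ∑' i : ℕ, (1/2 : ℝ) ^ i * (1/2) := by
        simp [pow_succ]
    _ = (∑' i : ℕ, (1/2 : ℝ) ^ i) * (1/2) := tsum_mul_right
    _ = 1 := by rw [h]; norm_num

lemma summable_dterm (β γ : ℕ → Bool) : Summable (dterm β γ) :=
  Summable.of_nonneg_of_le (dterm_nonneg β γ) (dterm_le β γ) summable_geo_succ

lemma le_d2 {β γ : ℕ → Bool} {i : ℕ} (h : β i ≠ γ i) : (1/2 : ℝ) ^ (i + 1) ≤ d2 β γ := by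
  rw [d2_eq_tsum, ← dterm_eq_of_ne h]
  exact Summable.le_tsum (summable_dterm β γ) i (fun j _ => dterm_nonneg β γ j)

lemma d2_le {β γ : ℕ → Bool} {N : ℕ} (h : ∀ i < N, β i = γ i) :
    d2 β γ ≤ (1/2 : ℝ) ^ N := by
  rw [d2_eq_tsum, ← Summable.sum_add_tsum_nat_add N (summable_dterm β γ)]
  have h0 : ∑ i ∈ Finset.range N, dterm β γ i = 0 := by
    apply Finset.sum_eq_zero
    intro i hi
    exact dterm_eq_zero (h i (Finset.mem_range.mp hi))
  rw [h0, zero_add]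
  have hle : ∀ i : ℕ, dterm β γ (i + N) ≤ (1/2 : ℝ) ^ N * (1/2 : ℝ) ^ (i + 1) := by
    intro i
    calc dterm β γ (i + N) ≤ (1/2 : ℝ) ^ (i + N + 1) := dterm_le β γ _
      _ = (1/2 : ℝ) ^ N * (1/2 : ℝ) ^ (i + 1) := by ring
  calc ∑' i, dterm β γ (i + N) ≤ ∑' i, (1/2 : ℝ) ^ N * (1/2 : ℝ) ^ (i + 1) := by
        apply Summable.tsum_le_tsum hle
        · exact ((summable_dterm β γ).comp_injective (add_left_injective N))
        · exact summable_geo_succ.mul_left _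
    _ = (1/2 : ℝ) ^ N * ∑' i : ℕ, (1/2 : ℝ) ^ (i + 1) := tsum_mul_left
    _ = (1/2 : ℝ) ^ N := by rw [tsum_geo_succ, mul_one]

lemma shift_iter (β : ℕ → Bool) (n i : ℕ) : shift^[n] β i = β (i + n) := by
  induction n generalizing β with
  | zero => rfl
  | succ n ih =>
    rw [Function.iterate_succ_apply, ih]
    show β (i + n + 1) = β (i + (n + 1))
    exact congrArg β (by omega)

/-- On the set `W` of sequences with finitely many 1's, the shift map is
topologically transitive and has sensitive dependence on initial conditions,
yet every point of `W` is eventually fixed (eventually the constant-0 sequence). -/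
theorem shift_on_finitely_many_ones :
    (∀ U V : Set (ℕ → Bool), U ⊆ Wset → V ⊆ Wset →
      (∃ U' : Set (ℕ → Bool), IsOpen2 U' ∧ U = Wset ∩ U') →
      (∃ V' : Set (ℕ → Bool), IsOpen2 V' ∧ V = Wset ∩ V') →
      U.Nonempty → V.Nonempty →
      ∃ n : ℕ, 0 < n ∧ ((shift^[n] '' U) ∩ V).Nonempty) ∧
    (∃ δ : ℝ, 0 < δ ∧
      ∀ x ∈ Wset, ∀ V : Set (ℕ → Bool), V ⊆ Wset →
        (∃ V' : Set (ℕ → Bool), IsOpen2 V' ∧ V = Wset ∩ V') → x ∈ V →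
        ∃ y ∈ V, ∃ n : ℕ, δ ≤ d2 (shift^[n] x) (shift^[n] y)) ∧
    (∀ β ∈ Wset, ∃ n : ℕ, shift^[n] β = fun _ => false) := by
  refine ⟨?_, ?_, ?_⟩
  · -- transitivity
    rintro U V hUW hVW ⟨U', hU'o, rfl⟩ ⟨V', hV'o, rfl⟩ ⟨x, hxU⟩ ⟨y, hyV⟩
    obtain ⟨ε, hε, hball⟩ := hU'o x hxU.2
    obtain ⟨N0, hN0⟩ := exists_pow_lt_of_lt_one hε (by norm_num : (1/2:ℝ) < 1)
    set N := max N0 1 with hN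
    have hNlt : (1/2 : ℝ) ^ N < ε :=
      lt_of_le_of_lt (pow_le_pow_of_le_one (by norm_num) (by norm_num) (le_max_left _ _)) hN0
    set z : ℕ → Bool := fun i => if i < N then x i else y (i - N) with hz
    have hzW : z ∈ Wset := by
      apply Set.Finite.subset (((hVW hyV).image (· + N)).union (Set.finite_Iio N))
      intro i hi
      by_cases hiN : i < N
      · exact Or.inr hiN
      · left
        refine ⟨i - N, ?_, by show i - N + N = i; omega⟩
        simpa [hz, hiN] using hi
    have hzU : z ∈ Wset ∩ U' := by
      refine ⟨hzW, hball z (lt_of_le_of_lt (d2_le ?_) hNlt)⟩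
      intro i hi
      simp [hz, hi]
    have hshift : shift^[N] z = y := by
      funext i
      rw [shift_iter]
      simp only [hz]
      rw [if_neg (by omega)]
      exact congrArg y (by omega)
    exact ⟨N, by omega, y, ⟨z, hzU, hshift⟩, hyV⟩
  · -- sensitivity
    refine ⟨1/2, by norm_num, ?_⟩
    rintro x hx V hVW ⟨V', hV'o, rfl⟩ hxV
    obtain ⟨ε, hε, hball⟩ := hV'o x hxV.2
    obtain ⟨N, hN⟩ := exists_pow_lt_of_lt_one hε (by norm_num : (1/2:ℝ) < 1)
    set y : ℕ → Bool := fun i => if i = N then !x i else x i with hy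
    have hyW : y ∈ Wset := by
      apply Set.Finite.subset (hx.union (Set.finite_singleton N))
      intro i hi
      by_cases hiN : i = N
      · exact Or.inr hiN
      · left; simpa [hy, hiN] using hi
    have hyV : y ∈ Wset ∩ V' := by
      refine ⟨hyW, hball y (lt_of_le_of_lt (d2_le ?_) hN)⟩
      intro i hi
      simp only [hy]
      rw [if_neg (by omega : ¬ i = N)]
    refine ⟨y, hyV, N, ?_⟩
    have hne : shift^[N] x 0 ≠ shift^[N] y 0 := by
      rw [shift_iter, shift_iter]
      simp [hy]
    simpa using le_d2 hne
  · -- every point eventually fixed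
    intro β hβ
    obtain ⟨N, hN⟩ := hβ.bddAbove
    refine ⟨N + 1, funext fun i => ?_⟩
    rw [shift_iter]
    cases hb : β (i + (N + 1)) with
    | false => rfl
    | true => exact absurd (hN hb) (by omega)
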